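/- arXiv:2505.04188 — 2 statements merged into one kernel-verified Lean document; each statement's English description precedes it below -/
import Mathlib

section
/- Let A{_τ×_σ}B be a smash biproduct bialgebra with σ right conormal. Then for all a∈A and b∈B: Σ a_σ ⊗ b_σ = Σ a_σ ⊗ ε_B(b_{(1)σ})b_{(2)}, where on the right σ is applied to b_{(1)}⊗a. -/
open TensorProduct

noncomputable section

variable (k : Type*) [Field k]

/-- Componentwise multiplication on `H ⊗ H` induced by a multiplication map `m` on `H`. -/
def mul2 (H : Type*) [AddCommGroup H] [Module k H] (m : H ⊗[k] H →ₗ[k] H) :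
    (H ⊗[k] H) ⊗[k] (H ⊗[k] H) →ₗ[k] H ⊗[k] H :=
  (TensorProduct.map m m) ∘ₗ (TensorProduct.tensorTensorTensorComm k H H H H).toLinearMap

/-- Componentwise multiplication on `H ⊗ (H ⊗ H)`. -/
def mul3 (H : Type*) [AddCommGroup H] [Module k H] (m : H ⊗[k] H →ₗ[k] H) :
    (H ⊗[k] (H ⊗[k] H)) ⊗[k] (H ⊗[k] (H ⊗[k] H)) →ₗ[k] H ⊗[k] (H ⊗[k] H) :=
  (TensorProduct.map m (mul2 k H m)) ∘ₗ
    (TensorProduct.tensorTensorTensorComm k H (H ⊗[k] H) H (H ⊗[k] H)).toLinearMap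

/-- `R ∈ H ⊗ H` is a quasitriangular structure with respect to the bialgebra
structure data `(m, Δ, e, ε)` on `H`:
(QT1) `(ε⊗id)(R) = e = (id⊗ε)(R)`, (QT2) `(Δ⊗id)(R) = R₁₃R₂₃`,
(QT3) `(id⊗Δ)(R) = R₁₃R₁₂`, (QT4) `RΔ(h) = Δᶜᵒᵖ(h)R`. -/
def IsQT (H : Type*) [AddCommGroup H] [Module k H]
    (m : H ⊗[k] H →ₗ[k] H) (Δ : H →ₗ[k] H ⊗[k] H) (e : H) (ε : H →ₗ[k] k)
    (R : H ⊗[k] H) : Prop :=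
  (TensorProduct.lid k H) ((LinearMap.rTensor H ε) R) = e ∧
  (TensorProduct.rid k H) ((LinearMap.lTensor H ε) R) = e ∧
  (TensorProduct.assoc k H H H).toLinearMap ((LinearMap.rTensor H Δ) R) =
    mul3 k H m (((LinearMap.lTensor H (TensorProduct.mk k H H e)) R) ⊗ₜ[k] (e ⊗ₜ[k] R)) ∧
  (LinearMap.lTensor H Δ) R =
    mul3 k H m (((LinearMap.lTensor H (TensorProduct.mk k H H e)) R) ⊗ₜ[k]
      ((LinearMap.lTensor H ((TensorProduct.mk k H H).flip e)) R)) ∧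
  ∀ h : H, mul2 k H m (R ⊗ₜ[k] Δ h) =
    mul2 k H m ((TensorProduct.comm k H H (Δ h)) ⊗ₜ[k] R)

variable (A B : Type*)
  [Ring A] [Algebra k A] [Coalgebra k A]
  [Ring B] [Algebra k B] [Coalgebra k B]

variable (σ : B ⊗[k] A →ₗ[k] A ⊗[k] B) (τ : A ⊗[k] B →ₗ[k] B ⊗[k] A)

/-- The smash product multiplication `(a⊗b)(a'⊗b') = Σ aa'_σ ⊗ b_σ b'` on `A ⊗ B`. -/
def smashMul : (A ⊗[k] B) ⊗[k] (A ⊗[k] B) →ₗ[k] A ⊗[k] B :=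
  (TensorProduct.map (LinearMap.mul' k A) (LinearMap.mul' k B))
    ∘ₗ (TensorProduct.assoc k A A (B ⊗[k] B)).symm.toLinearMap
    ∘ₗ (TensorProduct.map LinearMap.id
         ((TensorProduct.assoc k A B B).toLinearMap
           ∘ₗ (TensorProduct.map σ LinearMap.id)
           ∘ₗ (TensorProduct.assoc k B A B).symm.toLinearMap))
    ∘ₗ (TensorProduct.assoc k A B (A ⊗[k] B)).toLinearMap

/-- The smash coproduct comultiplication `Δ(a⊗b) = Σ a₍₁₎ ⊗ b₍₁₎τ ⊗ a₍₂₎τ ⊗ b₍₂₎` on `A ⊗ B`. -/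
def smashComul : A ⊗[k] B →ₗ[k] (A ⊗[k] B) ⊗[k] (A ⊗[k] B) :=
  (TensorProduct.assoc k A B (A ⊗[k] B)).symm.toLinearMap
    ∘ₗ (TensorProduct.map LinearMap.id
         ((TensorProduct.assoc k B A B).toLinearMap
           ∘ₗ (TensorProduct.map τ LinearMap.id)
           ∘ₗ (TensorProduct.assoc k A B B).symm.toLinearMap))
    ∘ₗ (TensorProduct.assoc k A A (B ⊗[k] B)).toLinearMap
    ∘ₗ (TensorProduct.map (Coalgebra.comul : A →ₗ[k] A ⊗[k] A)
          (Coalgebra.comul : B →ₗ[k] B ⊗[k] B))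

/-- The counit `ε_A ⊗ ε_B` of `A ⊗ B`. -/
def smashCounit : A ⊗[k] B →ₗ[k] k :=
  (LinearMap.mul' k k) ∘ₗ
    TensorProduct.map (Coalgebra.counit : A →ₗ[k] k) (Coalgebra.counit : B →ₗ[k] k)

/-- The projection `π_A = id_A ⊗ ε_B`. -/
def piA : A ⊗[k] B →ₗ[k] A :=
  (TensorProduct.rid k A).toLinearMap ∘ₗ LinearMap.lTensor A (Coalgebra.counit : B →ₗ[k] k)

/-- The projection `π_B = ε_A ⊗ id_B`. -/
def piB : A ⊗[k] B →ₗ[k] B :=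
  (TensorProduct.lid k B).toLinearMap ∘ₗ LinearMap.rTensor B (Coalgebra.counit : A →ₗ[k] k)

/-- `A {_τ×_σ} B` is a smash biproduct bialgebra. -/
structure IsSmashBiproduct : Prop where
  mul_assoc : ∀ x y z : A ⊗[k] B,
    smashMul k A B σ ((smashMul k A B σ (x ⊗ₜ[k] y)) ⊗ₜ[k] z)
      = smashMul k A B σ (x ⊗ₜ[k] (smashMul k A B σ (y ⊗ₜ[k] z)))
  one_mul : ∀ x : A ⊗[k] B, smashMul k A B σ (((1:A) ⊗ₜ[k] (1:B)) ⊗ₜ[k] x) = x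
  mul_one : ∀ x : A ⊗[k] B, smashMul k A B σ (x ⊗ₜ[k] ((1:A) ⊗ₜ[k] (1:B))) = x
  sigma_one_left : ∀ b : B, σ (b ⊗ₜ[k] (1:A)) = (1:A) ⊗ₜ[k] b
  sigma_one_right : ∀ a : A, σ ((1:B) ⊗ₜ[k] a) = a ⊗ₜ[k] (1:B)
  comul_coassoc : ∀ x : A ⊗[k] B,
    (TensorProduct.assoc k (A ⊗[k] B) (A ⊗[k] B) (A ⊗[k] B)).toLinearMap
        ((LinearMap.rTensor (A ⊗[k] B) (smashComul k A B τ)) (smashComul k A B τ x))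
      = (LinearMap.lTensor (A ⊗[k] B) (smashComul k A B τ)) (smashComul k A B τ x)
  counit_comul : ∀ x : A ⊗[k] B,
    (TensorProduct.lid k (A ⊗[k] B))
        ((LinearMap.rTensor (A ⊗[k] B) (smashCounit k A B)) (smashComul k A B τ x)) = x
  comul_counit : ∀ x : A ⊗[k] B,
    (TensorProduct.rid k (A ⊗[k] B))
        ((LinearMap.lTensor (A ⊗[k] B) (smashCounit k A B)) (smashComul k A B τ x)) = x
  tau_counit_left : ∀ (a : A) (b : B),
    (TensorProduct.lid k A)
        ((LinearMap.rTensor A (Coalgebra.counit : B →ₗ[k] k)) (τ (a ⊗ₜ[k] b)))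
      = (Coalgebra.counit : B →ₗ[k] k) b • a
  tau_counit_right : ∀ (a : A) (b : B),
    (TensorProduct.rid k B)
        ((LinearMap.lTensor B (Coalgebra.counit : A →ₗ[k] k)) (τ (a ⊗ₜ[k] b)))
      = (Coalgebra.counit : A →ₗ[k] k) a • b
  comul_mul : ∀ x y : A ⊗[k] B,
    smashComul k A B τ (smashMul k A B σ (x ⊗ₜ[k] y))
      = mul2 k (A ⊗[k] B) (smashMul k A B σ)
          ((smashComul k A B τ x) ⊗ₜ[k] (smashComul k A B τ y))
  comul_one : smashComul k A B τ ((1:A) ⊗ₜ[k] (1:B))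
      = ((1:A) ⊗ₜ[k] (1:B)) ⊗ₜ[k] ((1:A) ⊗ₜ[k] (1:B))
  counit_mul : ∀ x y : A ⊗[k] B,
    smashCounit k A B (smashMul k A B σ (x ⊗ₜ[k] y)) = smashCounit k A B x * smashCounit k A B y
  counit_one : smashCounit k A B ((1:A) ⊗ₜ[k] (1:B)) = 1

/-- `σ` is right conormal: `(ε_A ⊗ id_B) ∘ σ = id_B ⊗ ε_A`. -/
def RightConormal : Prop := ∀ (b : B) (a : A),
  (TensorProduct.lid k B)
      ((LinearMap.rTensor B (Coalgebra.counit : A →ₗ[k] k)) (σ (b ⊗ₜ[k] a)))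
    = (Coalgebra.counit : A →ₗ[k] k) a • b

/-- `σ` is left conormal: `(id_A ⊗ ε_B) ∘ σ = ε_B ⊗ id_A`. -/
def LeftConormal : Prop := ∀ (b : B) (a : A),
  (TensorProduct.rid k A)
      ((LinearMap.lTensor A (Coalgebra.counit : B →ₗ[k] k)) (σ (b ⊗ₜ[k] a)))
    = (Coalgebra.counit : B →ₗ[k] k) b • a

/-- `τ` is left normal: `τ(a ⊗ 1_B) = 1_B ⊗ a`. -/
def LeftNormal : Prop := ∀ a : A, τ (a ⊗ₜ[k] (1:B)) = (1:B) ⊗ₜ[k] a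

/-- `τ` is right normal: `τ(1_A ⊗ b) = b ⊗ 1_A`. -/
def RightNormal : Prop := ∀ b : B, τ ((1:A) ⊗ₜ[k] b) = b ⊗ₜ[k] (1:A)


section Aux
set_option synthInstance.maxHeartbeats 1000000
set_option maxHeartbeats 2000000
set_option linter.unusedSectionVars false

lemma aux_smashMul_tmul (a a' : A) (b b' : B) :
    smashMul k A B σ ((a ⊗ₜ[k] b) ⊗ₜ[k] (a' ⊗ₜ[k] b')) =
      TensorProduct.map (LinearMap.mulLeft k a) (LinearMap.mulRight k b') (σ (b ⊗ₜ[k] a')) := by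
  simp only [smashMul, LinearMap.coe_comp, Function.comp_apply, LinearEquiv.coe_coe,
    TensorProduct.assoc_tmul, TensorProduct.assoc_symm_tmul, TensorProduct.map_tmul,
    LinearMap.id_coe, id_eq]
  induction σ (b ⊗ₜ[k] a') using TensorProduct.induction_on with
  | zero => simp
  | tmul x y => simp [LinearMap.mul'_apply, LinearMap.mulLeft_apply, LinearMap.mulRight_apply]
  | add x y hx hy => simp only [tmul_add, add_tmul, map_add, hx, hy]

/-- `Φ a₁ c₂ : B ⊗ A →ₗ (A⊗B)⊗(A⊗B)`, `y ⊗ x ↦ (a₁ ⊗ y) ⊗ (x ⊗ c₂)`. -/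
def auxPhi (a1 : A) (c2 : B) : B ⊗[k] A →ₗ[k] (A ⊗[k] B) ⊗[k] (A ⊗[k] B) :=
  TensorProduct.map (TensorProduct.mk k A B a1) ((TensorProduct.mk k A B).flip c2)

lemma aux_smashComul_tmul (a : A) (b : B)
    (ιa ιb : Type*) (sa : Finset ιa) (sb : Finset ιb)
    (f g : ιa → A) (h l : ιb → B)
    (ha : Coalgebra.comul (R := k) a = ∑ i ∈ sa, f i ⊗ₜ[k] g i)
    (hb : Coalgebra.comul (R := k) b = ∑ j ∈ sb, h j ⊗ₜ[k] l j) :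
    smashComul k A B τ (a ⊗ₜ[k] b)
      = ∑ i ∈ sa, ∑ j ∈ sb, auxPhi k A B (f i) (l j) (τ (g i ⊗ₜ[k] h j)) := by
  simp only [smashComul, LinearMap.coe_comp, Function.comp_apply, LinearEquiv.coe_coe,
    TensorProduct.map_tmul, ha, hb, TensorProduct.sum_tmul, TensorProduct.tmul_sum, map_sum]
  rw [Finset.sum_comm]
  refine Finset.sum_congr rfl fun i _ => Finset.sum_congr rfl fun j _ => ?_
  simp only [TensorProduct.assoc_tmul, TensorProduct.assoc_symm_tmul, TensorProduct.map_tmul,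
    LinearMap.id_coe, id_eq, LinearMap.coe_comp, Function.comp_apply, LinearEquiv.coe_coe]
  generalize τ (g i ⊗ₜ[k] h j) = z
  induction z using TensorProduct.induction_on with
  | zero => simp [auxPhi]
  | tmul x y => simp [auxPhi, TensorProduct.assoc_tmul, TensorProduct.assoc_symm_tmul]
  | add x y hx hy => simp only [tmul_add, add_tmul, map_add, hx, hy]

lemma aux_mul2_tmul (X Y Z W : A ⊗[k] B) :
    mul2 k (A ⊗[k] B) (smashMul k A B σ) ((X ⊗ₜ[k] Y) ⊗ₜ[k] (Z ⊗ₜ[k] W))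
      = smashMul k A B σ (X ⊗ₜ[k] Z) ⊗ₜ[k] smashMul k A B σ (Y ⊗ₜ[k] W) := by
  simp [mul2]

lemma aux_piA_tmul (a : A) (b : B) :
    piA k A B (a ⊗ₜ[k] b) = (Coalgebra.counit : B →ₗ[k] k) b • a := by
  simp [piA]

lemma aux_piB_tmul (a : A) (b : B) :
    piB k A B (a ⊗ₜ[k] b) = (Coalgebra.counit : A →ₗ[k] k) a • b := by
  simp [piB]

lemma aux_smashCounit_tmul (a : A) (b : B) :
    smashCounit k A B (a ⊗ₜ[k] b)
      = (Coalgebra.counit : A →ₗ[k] k) a * (Coalgebra.counit : B →ₗ[k] k) b := by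
  simp [smashCounit, LinearMap.mul'_apply]

end Aux
/-- The pairing `ε_B ⊗ ε_A : B ⊗ A → k`. -/
def auxPair : B ⊗[k] A →ₗ[k] k :=
  LinearMap.mul' k k ∘ₗ TensorProduct.map (Coalgebra.counit : B →ₗ[k] k)
    (Coalgebra.counit : A →ₗ[k] k)

lemma auxPair_tmul (y : B) (x : A) :
    auxPair k A B (y ⊗ₜ[k] x)
      = (Coalgebra.counit : B →ₗ[k] k) y * (Coalgebra.counit : A →ₗ[k] k) x := by
  simp [auxPair, LinearMap.mul'_apply]

/-- The collapse map `id_B ⊗ ε_A : B ⊗ A → B`. -/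
def auxColl : B ⊗[k] A →ₗ[k] B :=
  (TensorProduct.rid k B).toLinearMap ∘ₗ LinearMap.lTensor B (Coalgebra.counit : A →ₗ[k] k)

lemma auxColl_tmul (y : B) (x : A) :
    auxColl k A B (y ⊗ₜ[k] x) = (Coalgebra.counit : A →ₗ[k] k) x • y := by
  simp [auxColl]

lemma auxPair_eq_counit_coll (z : B ⊗[k] A) :
    auxPair k A B z = (Coalgebra.counit : B →ₗ[k] k) (auxColl k A B z) := by
  induction z using TensorProduct.induction_on with
  | zero => simp
  | tmul y x => simp [auxPair_tmul, auxColl_tmul, mul_comm]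
  | add x y hx hy => simp [map_add, hx, hy]

lemma aux_coll_tau (hsb : IsSmashBiproduct k A B σ τ) (a : A) (b : B) :
    auxColl k A B (τ (a ⊗ₜ[k] b)) = (Coalgebra.counit : A →ₗ[k] k) a • b :=
  hsb.tau_counit_right a b

lemma aux_pair_tau (hsb : IsSmashBiproduct k A B σ τ) (a : A) (b : B) :
    auxPair k A B (τ (a ⊗ₜ[k] b))
      = (Coalgebra.counit : A →ₗ[k] k) a * (Coalgebra.counit : B →ₗ[k] k) b := by
  rw [auxPair_eq_counit_coll, aux_coll_tau k A B σ τ hsb, map_smul, smul_eq_mul]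

lemma aux_rc (hrc : RightConormal k A B σ) (b : B) (a : A) :
    piB k A B (σ (b ⊗ₜ[k] a)) = (Coalgebra.counit : A →ₗ[k] k) a • b :=
  hrc b a

/-- counit collapse: `Σ ε(g i) • f i = a` for a representation of `comul a`. -/
lemma aux_counit_right {M : Type*} [Ring M] [Algebra k M] [Coalgebra k M]
    (a : M) {ι : Type*} (s : Finset ι) (f g : ι → M)
    (hS : Coalgebra.comul (R := k) a = ∑ i ∈ s, f i ⊗ₜ[k] g i) :
    ∑ i ∈ s, (Coalgebra.counit : M →ₗ[k] k) (g i) • f i = a := by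
  have h := Coalgebra.lTensor_counit_comul (R := k) a
  rw [hS] at h
  have := congrArg (TensorProduct.rid k M) h
  simpa [map_sum] using this

lemma aux_counit_left {M : Type*} [Ring M] [Algebra k M] [Coalgebra k M]
    (a : M) {ι : Type*} (s : Finset ι) (f g : ι → M)
    (hS : Coalgebra.comul (R := k) a = ∑ i ∈ s, f i ⊗ₜ[k] g i) :
    ∑ i ∈ s, (Coalgebra.counit : M →ₗ[k] k) (f i) • g i = a := by
  have h := Coalgebra.rTensor_counit_comul (R := k) a
  rw [hS] at h
  have := congrArg (TensorProduct.lid k M) h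
  simpa [map_sum] using this

lemma aux_counit_one (hsb : IsSmashBiproduct k A B σ τ) :
    (Coalgebra.counit : A →ₗ[k] k) 1 * (Coalgebra.counit : B →ₗ[k] k) 1 = 1 := by
  have h := hsb.counit_one
  rwa [aux_smashCounit_tmul] at h

lemma aux_epsB_mul (hsb : IsSmashBiproduct k A B σ τ) (x y : B) :
    (Coalgebra.counit : B →ₗ[k] k) (x * y)
      = (Coalgebra.counit : A →ₗ[k] k) 1 *
        ((Coalgebra.counit : B →ₗ[k] k) x * (Coalgebra.counit : B →ₗ[k] k) y) := by
  have h := hsb.counit_mul ((1 : A) ⊗ₜ[k] x) ((1 : A) ⊗ₜ[k] y)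
  rw [aux_smashMul_tmul, hsb.sigma_one_left] at h
  simp only [TensorProduct.map_tmul, LinearMap.mulLeft_apply, LinearMap.mulRight_apply,
    one_mul, aux_smashCounit_tmul] at h
  have hone := aux_counit_one k A B σ τ hsb
  linear_combination (Coalgebra.counit : B →ₗ[k] k) 1 * h +
    ((Coalgebra.counit : A →ₗ[k] k) 1 * ((Coalgebra.counit : B →ₗ[k] k) x *
      (Coalgebra.counit : B →ₗ[k] k) y) - (Coalgebra.counit : B →ₗ[k] k) (x * y)) * hone

lemma aux_epsA_mul (hsb : IsSmashBiproduct k A B σ τ) (x y : A) :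
    (Coalgebra.counit : A →ₗ[k] k) (x * y)
      = (Coalgebra.counit : B →ₗ[k] k) 1 *
        ((Coalgebra.counit : A →ₗ[k] k) x * (Coalgebra.counit : A →ₗ[k] k) y) := by
  have h := hsb.counit_mul (x ⊗ₜ[k] (1 : B)) (y ⊗ₜ[k] (1 : B))
  rw [aux_smashMul_tmul, hsb.sigma_one_right] at h
  simp only [TensorProduct.map_tmul, LinearMap.mulLeft_apply, LinearMap.mulRight_apply,
    mul_one, aux_smashCounit_tmul] at h
  have hone := aux_counit_one k A B σ τ hsb
  linear_combination (Coalgebra.counit : A →ₗ[k] k) 1 * h +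
    ((Coalgebra.counit : B →ₗ[k] k) 1 * ((Coalgebra.counit : A →ₗ[k] k) x *
      (Coalgebra.counit : A →ₗ[k] k) y) - (Coalgebra.counit : A →ₗ[k] k) (x * y)) * hone
set_option linter.unusedSectionVars false
set_option synthInstance.maxHeartbeats 1000000
set_option maxHeartbeats 2000000

/-- `F = π_A ⊗ π_B`. -/
def auxF : (A ⊗[k] B) ⊗[k] (A ⊗[k] B) →ₗ[k] A ⊗[k] B :=
  TensorProduct.map (piA k A B) (piB k A B)

lemma auxF_phi (f : A) (l : B) (T : B ⊗[k] A) :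
    auxF k A B (auxPhi k A B f l T) = auxPair k A B T • (f ⊗ₜ[k] l) := by
  induction T using TensorProduct.induction_on with
  | zero => simp [auxPhi]
  | tmul y x =>
      simp only [auxPhi, auxF, TensorProduct.map_tmul, TensorProduct.mk_apply,
        LinearMap.flip_apply, aux_piA_tmul, aux_piB_tmul, auxPair_tmul,
        TensorProduct.smul_tmul', TensorProduct.tmul_smul, smul_smul, mul_comm]
  | add x y hx hy => simp only [map_add, hx, hy, add_smul]

lemma auxF_smashComul (hsb : IsSmashBiproduct k A B σ τ) (z : A ⊗[k] B) :
    auxF k A B (smashComul k A B τ z) = z := by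
  induction z using TensorProduct.induction_on with
  | zero => simp
  | tmul a b =>
      obtain ⟨S, hS⟩ := TensorProduct.exists_finset (Coalgebra.comul (R := k) a)
      obtain ⟨T, hT⟩ := TensorProduct.exists_finset (Coalgebra.comul (R := k) b)
      have hS' : Coalgebra.comul (R := k) a = ∑ i ∈ S, Prod.fst i ⊗ₜ[k] Prod.snd i := hS
      have hT' : Coalgebra.comul (R := k) b = ∑ j ∈ T, Prod.fst j ⊗ₜ[k] Prod.snd j := hT
      rw [aux_smashComul_tmul k A B τ a b (A × A) (B × B) S T Prod.fst Prod.snd Prod.fst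
        Prod.snd hS' hT']
      rw [map_sum]
      simp only [map_sum, auxF_phi, aux_pair_tau k A B σ τ hsb]
      calc ∑ i ∈ S, ∑ j ∈ T,
            ((Coalgebra.counit : A →ₗ[k] k) i.2 * (Coalgebra.counit : B →ₗ[k] k) j.1) •
              (i.1 ⊗ₜ[k] j.2)
          = ∑ i ∈ S, ∑ j ∈ T,
              ((Coalgebra.counit : A →ₗ[k] k) i.2 • i.1) ⊗ₜ[k]
                ((Coalgebra.counit : B →ₗ[k] k) j.1 • j.2) := by
            refine Finset.sum_congr rfl fun i _ => Finset.sum_congr rfl fun j _ => ?_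
            rw [mul_smul, ← TensorProduct.tmul_smul, TensorProduct.smul_tmul']
        _ = (∑ i ∈ S, (Coalgebra.counit : A →ₗ[k] k) i.2 • i.1) ⊗ₜ[k]
              (∑ j ∈ T, (Coalgebra.counit : B →ₗ[k] k) j.1 • j.2) := by
            rw [TensorProduct.sum_tmul]
            exact Finset.sum_congr rfl fun i _ => (TensorProduct.tmul_sum _ _ _).symm
        _ = a ⊗ₜ[k] b := by
            rw [aux_counit_right k a S Prod.fst Prod.snd hS,
              aux_counit_left k b T Prod.fst Prod.snd hT]
  | add x y hx hy => simp only [map_add, hx, hy]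

lemma aux_piA_map_mul (hsb : IsSmashBiproduct k A B σ τ) (p : A) (y' : B) (z : A ⊗[k] B) :
    piA k A B (TensorProduct.map (LinearMap.mulLeft k p) (LinearMap.mulRight k y') z)
      = ((Coalgebra.counit : A →ₗ[k] k) 1 * (Coalgebra.counit : B →ₗ[k] k) y') •
          (p * piA k A B z) := by
  induction z using TensorProduct.induction_on with
  | zero => simp
  | tmul u v =>
      simp only [TensorProduct.map_tmul, LinearMap.mulLeft_apply, LinearMap.mulRight_apply,
        aux_piA_tmul, aux_epsB_mul k A B σ τ hsb v y', mul_smul_comm, smul_smul]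
      ring_nf
  | add x y hx hy => simp only [map_add, hx, hy, mul_add, smul_add]

lemma aux_piB_map_mul (hsb : IsSmashBiproduct k A B σ τ) (x : A) (o : B) (z : A ⊗[k] B) :
    piB k A B (TensorProduct.map (LinearMap.mulLeft k x) (LinearMap.mulRight k o) z)
      = ((Coalgebra.counit : B →ₗ[k] k) 1 * (Coalgebra.counit : A →ₗ[k] k) x) •
          (piB k A B z * o) := by
  induction z using TensorProduct.induction_on with
  | zero => simp
  | tmul u v =>
      simp only [TensorProduct.map_tmul, LinearMap.mulLeft_apply, LinearMap.mulRight_apply,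
        aux_piB_tmul, aux_epsA_mul k A B σ τ hsb x u, smul_mul_assoc, smul_smul]
      ring_nf
  | add x y hx hy => simp only [map_add, hx, hy, add_mul, smul_add]

lemma aux_psi (hsb : IsSmashBiproduct k A B σ τ) (hrc : RightConormal k A B σ)
    (p1 a1 : A) (c2 o2 : B) (T S : B ⊗[k] A) :
    auxF k A B (mul2 k (A ⊗[k] B) (smashMul k A B σ)
        ((auxPhi k A B p1 c2 T) ⊗ₜ[k] (auxPhi k A B a1 o2 S)))
      = (((Coalgebra.counit : A →ₗ[k] k) 1 * (Coalgebra.counit : B →ₗ[k] k) 1) *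
            auxPair k A B S) •
          ((p1 * piA k A B (σ (auxColl k A B T ⊗ₜ[k] a1))) ⊗ₜ[k] (c2 * o2)) := by
  induction T using TensorProduct.induction_on with
  | zero => simp [auxPhi, aux_mul2_tmul]
  | add T1 T2 h1 h2 =>
      simp only [map_add, TensorProduct.add_tmul, mul_add, smul_add, h1, h2]
  | tmul y x =>
      induction S using TensorProduct.induction_on with
      | zero => simp [auxPhi, aux_mul2_tmul]
      | add S1 S2 h1 h2 =>
          simp only [map_add, TensorProduct.tmul_add, mul_add, add_smul, h1, h2]
      | tmul y' x' =>
          simp only [auxPhi, TensorProduct.map_tmul, TensorProduct.mk_apply,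
            LinearMap.flip_apply, aux_mul2_tmul, auxF, aux_smashMul_tmul,
            aux_piA_map_mul k A B σ τ hsb, aux_piB_map_mul k A B σ τ hsb,
            aux_rc k A B σ hrc, auxPair_tmul, auxColl_tmul]
          simp only [TensorProduct.smul_tmul', TensorProduct.tmul_smul, smul_smul,
            smul_mul_assoc, mul_smul_comm, map_smul, LinearMap.map_smul₂]
          rw [(TensorProduct.smul_tmul' ((Coalgebra.counit : A →ₗ[k] k) x) y a1).symm]
          simp only [map_smul, mul_smul_comm, smul_smul, ← TensorProduct.smul_tmul']
          match_scalars
          ring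
/-- `W β1 β2 : A ⊗ (A ⊗ B) →ₗ A ⊗ B`, `P ⊗ (R ⊗ Q) ↦ (P * π_A(σ(β1 ⊗ R))) ⊗ (β2 * Q)`. -/
def auxW (β1 β2 : B) : A ⊗[k] (A ⊗[k] B) →ₗ[k] A ⊗[k] B :=
  (TensorProduct.map (LinearMap.mul' k A) LinearMap.id)
    ∘ₗ (TensorProduct.assoc k A A B).symm.toLinearMap
    ∘ₗ LinearMap.lTensor A
        (TensorProduct.map ((piA k A B) ∘ₗ σ ∘ₗ TensorProduct.mk k B A β1)
          (LinearMap.mulLeft k β2))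

lemma auxW_tmul (β1 β2 : B) (P R : A) (Q : B) :
    auxW k A B σ β1 β2 (P ⊗ₜ[k] (R ⊗ₜ[k] Q))
      = (P * piA k A B (σ (β1 ⊗ₜ[k] R))) ⊗ₜ[k] (β2 * Q) := by
  simp [auxW, LinearMap.mul'_apply]
/-- Identity (B7.1): if `σ` is right conormal then
`Σ a_σ ⊗ b_σ = Σ a_σ ⊗ ε_B(b₍₁₎σ) b₍₂₎`, where on the right `σ` is applied to `b₍₁₎ ⊗ a`. -/
theorem stmt9 (hsb : IsSmashBiproduct k A B σ τ)
    (hrc : RightConormal k A B σ)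
    (a : A) (b : B)
    (ι₁ ι₂ : Type) [Fintype ι₁] [Fintype ι₂]
    (b1 b2 : ι₁ → B)
    (hΔ : Coalgebra.comul (R := k) b = ∑ t : ι₁, b1 t ⊗ₜ[k] b2 t)
    (aσ : ι₁ → ι₂ → A) (bσ : ι₁ → ι₂ → B)
    (hσ : ∀ t, σ (b1 t ⊗ₜ[k] a) = ∑ u : ι₂, aσ t u ⊗ₜ[k] bσ t u) :
    σ (b ⊗ₜ[k] a)
      = ∑ t : ι₁, ∑ u : ι₂,
          (Coalgebra.counit : B →ₗ[k] k) (bσ t u) • (aσ t u ⊗ₜ[k] b2 t) := by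
  classical
  obtain ⟨SA, hSA⟩ := TensorProduct.exists_finset (Coalgebra.comul (R := k) (1 : A))
  obtain ⟨SB, hSB⟩ := TensorProduct.exists_finset (Coalgebra.comul (R := k) (1 : B))
  obtain ⟨SA2, hSA2⟩ := TensorProduct.exists_finset (Coalgebra.comul (R := k) a)
  have hSA' : Coalgebra.comul (R := k) (1 : A) = ∑ i ∈ SA, Prod.fst i ⊗ₜ[k] Prod.snd i := hSA
  have hSB' : Coalgebra.comul (R := k) (1 : B) = ∑ i ∈ SB, Prod.fst i ⊗ₜ[k] Prod.snd i := hSB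
  have hSA2' : Coalgebra.comul (R := k) a = ∑ i ∈ SA2, Prod.fst i ⊗ₜ[k] Prod.snd i := hSA2
  have hΔ' : Coalgebra.comul (R := k) b = ∑ t ∈ Finset.univ, b1 t ⊗ₜ[k] b2 t := hΔ
  have hone := aux_counit_one k A B σ τ hsb
  have hA1 : ∑ p ∈ SA, (Coalgebra.counit : A →ₗ[k] k) p.2 • p.1 = (1 : A) :=
    aux_counit_right k (1 : A) SA Prod.fst Prod.snd hSA'
  have hB1 : ∑ q ∈ SB, (Coalgebra.counit : B →ₗ[k] k) q.1 • q.2 = (1 : B) :=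
    aux_counit_left k (1 : B) SB Prod.fst Prod.snd hSB'
  have ha : ∑ r ∈ SA2, (Coalgebra.counit : A →ₗ[k] k) r.2 • r.1 = a :=
    aux_counit_right k a SA2 Prod.fst Prod.snd hSA2'
  have key := congrArg (auxF k A B) (hsb.comul_mul ((1 : A) ⊗ₜ[k] b) (a ⊗ₜ[k] (1 : B)))
  have hmul : smashMul k A B σ (((1 : A) ⊗ₜ[k] b) ⊗ₜ[k] (a ⊗ₜ[k] (1 : B)))
      = σ (b ⊗ₜ[k] a) := by
    rw [aux_smashMul_tmul, LinearMap.mulLeft_one, LinearMap.mulRight_one,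
      TensorProduct.map_id, LinearMap.id_apply]
  rw [hmul, auxF_smashComul k A B σ τ hsb] at key
  rw [key]
  rw [aux_smashComul_tmul k A B τ (1 : A) b (A × A) ι₁ SA Finset.univ Prod.fst Prod.snd
      b1 b2 hSA' hΔ',
    aux_smashComul_tmul k A B τ a (1 : B) (A × A) (B × B) SA2 SB Prod.fst Prod.snd
      Prod.fst Prod.snd hSA2' hSB']
  simp only [TensorProduct.sum_tmul, TensorProduct.tmul_sum, map_sum]
  have hterm : ∀ (p : A × A) (t : ι₁) (r : A × A) (q : B × B),
      auxF k A B (mul2 k (A ⊗[k] B) (smashMul k A B σ)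
        ((auxPhi k A B p.1 (b2 t) (τ (p.2 ⊗ₜ[k] b1 t))) ⊗ₜ[k]
         (auxPhi k A B r.1 q.2 (τ (r.2 ⊗ₜ[k] q.1)))))
      = auxW k A B σ (b1 t) (b2 t)
          (((Coalgebra.counit : A →ₗ[k] k) p.2 • p.1) ⊗ₜ[k]
            (((Coalgebra.counit : A →ₗ[k] k) r.2 • r.1) ⊗ₜ[k]
              ((Coalgebra.counit : B →ₗ[k] k) q.1 • q.2))) := by
    intro p t r q
    rw [aux_psi k A B σ τ hsb hrc, aux_pair_tau k A B σ τ hsb, aux_coll_tau k A B σ τ hsb,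
      hone, one_mul]
    simp only [← TensorProduct.smul_tmul', TensorProduct.tmul_smul, map_smul, smul_smul,
      mul_smul_comm, auxW_tmul]
    match_scalars
    ring
  simp only [hterm]
  refine Eq.trans (Finset.sum_congr rfl fun r _ => Finset.sum_congr rfl fun q _ =>
    Finset.sum_comm) ?_
  refine Eq.trans (Finset.sum_congr rfl fun r _ => Finset.sum_comm) ?_
  refine Eq.trans Finset.sum_comm ?_
  refine Finset.sum_congr rfl fun t _ => ?_
  have fold1 : ∀ (r : A × A) (q : B × B),
      (∑ p ∈ SA, auxW k A B σ (b1 t) (b2 t)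
          (((Coalgebra.counit : A →ₗ[k] k) p.2 • p.1) ⊗ₜ[k]
            (((Coalgebra.counit : A →ₗ[k] k) r.2 • r.1) ⊗ₜ[k]
              ((Coalgebra.counit : B →ₗ[k] k) q.1 • q.2))))
        = auxW k A B σ (b1 t) (b2 t)
            ((1 : A) ⊗ₜ[k]
              (((Coalgebra.counit : A →ₗ[k] k) r.2 • r.1) ⊗ₜ[k]
                ((Coalgebra.counit : B →ₗ[k] k) q.1 • q.2))) := by
    intro r q
    rw [← map_sum, ← TensorProduct.sum_tmul, hA1]
  simp only [fold1]
  have fold2 : ∀ r : A × A,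
      (∑ q ∈ SB, auxW k A B σ (b1 t) (b2 t)
          ((1 : A) ⊗ₜ[k]
            (((Coalgebra.counit : A →ₗ[k] k) r.2 • r.1) ⊗ₜ[k]
              ((Coalgebra.counit : B →ₗ[k] k) q.1 • q.2))))
        = auxW k A B σ (b1 t) (b2 t)
            ((1 : A) ⊗ₜ[k]
              (((Coalgebra.counit : A →ₗ[k] k) r.2 • r.1) ⊗ₜ[k] (1 : B))) := by
    intro r
    rw [← map_sum, ← TensorProduct.tmul_sum, ← TensorProduct.tmul_sum, hB1]
  simp only [fold2]
  rw [← map_sum, ← TensorProduct.tmul_sum, ← TensorProduct.sum_tmul, ha]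
  rw [auxW_tmul, one_mul, mul_one, hσ t, map_sum]
  simp only [aux_piA_tmul]
  rw [TensorProduct.sum_tmul]
  exact Finset.sum_congr rfl fun u _ => (TensorProduct.smul_tmul' _ _ _).symm

end
end

section
/- Let A{_τ×_σ}B be a smash biproduct bialgebra with σ both left conormal (Σ a_σε_B(b_σ)=aε_B(b)) and right conormal (Σ ε_A(a_σ)b_σ=ε_A(a)b). Then σ is the tensor flip: σ(b⊗a) = a⊗b for all a∈A, b∈B. -/
open TensorProduct

noncomputable section

variable (k : Type*) [Field k]

variable (A B : Type*)
  [Ring A] [Algebra k A] [Coalgebra k A]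
  [Ring B] [Algebra k B] [Coalgebra k B]

variable (σ : B ⊗[k] A →ₗ[k] A ⊗[k] B) (τ : A ⊗[k] B →ₗ[k] B ⊗[k] A)

/-! Let `π = π_A ⊗ π_B : (A ⊗ B) ⊗ (A ⊗ B) → A ⊗ B`. The counit axioms of `A` and `B`, together
with the compatibility of `τ` with `ε_B`, make `π` a left inverse of the smash coproduct.
Conormality of `σ` makes `π_A` and `π_B` multiplicative up to the scalars `ε_A(1)`, `ε_B(1)`,
whose product is `1`; hence `π` carries the componentwise smash product of
`(A ⊗ B) ⊗ (A ⊗ B)` to the product of the tensor product algebra `A ⊗ B`. Since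
`σ(b ⊗ a) = (1 ⊗ b)(a ⊗ 1)` in the smash product, applying `π` to the bialgebra axiom
`Δ(xy) = Δ(x)Δ(y)` gives `σ(b ⊗ a) = (1 ⊗ b) * (a ⊗ 1) = a ⊗ b`. -/

lemma smashMul_tmul_tmul {A B : Type*} [Ring A] [Algebra k A] [Ring B] [Algebra k B]
    (σ : B ⊗[k] A →ₗ[k] A ⊗[k] B) (a a' : A) (b b' : B) :
    smashMul k A B σ ((a ⊗ₜ[k] b) ⊗ₜ[k] (a' ⊗ₜ[k] b'))
      = TensorProduct.map (LinearMap.mulLeft k a) (LinearMap.mulRight k b') (σ (b ⊗ₜ[k] a')) := by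
  simp only [smashMul, LinearMap.coe_comp, Function.comp_apply, LinearEquiv.coe_coe,
    TensorProduct.assoc_tmul, TensorProduct.map_tmul, LinearMap.id_coe, id_eq,
    TensorProduct.assoc_symm_tmul]
  induction σ (b ⊗ₜ[k] a') using TensorProduct.induction_on with
  | zero => simp
  | tmul x y => simp
  | add x y hx hy => simp only [add_tmul, tmul_add, map_add, hx, hy]

lemma smashMul_one_tmul_tmul_one {A B : Type*} [Ring A] [Algebra k A] [Ring B] [Algebra k B]
    (σ : B ⊗[k] A →ₗ[k] A ⊗[k] B) (a : A) (b : B) :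
    smashMul k A B σ (((1 : A) ⊗ₜ[k] b) ⊗ₜ[k] (a ⊗ₜ[k] (1 : B))) = σ (b ⊗ₜ[k] a) := by
  rw [smashMul_tmul_tmul, LinearMap.mulLeft_one, LinearMap.mulRight_one, TensorProduct.map_id,
    LinearMap.id_apply]

section SmashBiproduct

variable {k A B σ τ}

lemma smashCounit_tmul (a : A) (b : B) :
    smashCounit k A B (a ⊗ₜ[k] b)
      = Coalgebra.counit (R := k) a * Coalgebra.counit (R := k) b := by
  simp [smashCounit]

lemma piA_tmul {A : Type*} [Ring A] [Algebra k A] (a : A) (b : B) :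
    piA k A B (a ⊗ₜ[k] b) = Coalgebra.counit (R := k) b • a := by
  simp [piA]

lemma piB_tmul {B : Type*} [Ring B] [Algebra k B] (a : A) (b : B) :
    piB k A B (a ⊗ₜ[k] b) = Coalgebra.counit (R := k) a • b := by
  simp [piB]

lemma LeftConormal.piA_sigma {A : Type*} [Ring A] [Algebra k A] {σ : B ⊗[k] A →ₗ[k] A ⊗[k] B}
    (hlc : LeftConormal k A B σ) (b : B) (a : A) :
    piA k A B (σ (b ⊗ₜ[k] a)) = Coalgebra.counit (R := k) b • a :=
  hlc b a

lemma RightConormal.piB_sigma {B : Type*} [Ring B] [Algebra k B] {σ : B ⊗[k] A →ₗ[k] A ⊗[k] B}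
    (hrc : RightConormal k A B σ) (b : B) (a : A) :
    piB k A B (σ (b ⊗ₜ[k] a)) = Coalgebra.counit (R := k) a • b :=
  hrc b a

lemma map_piA_piB_assoc_tmul (x : A) (c : B ⊗[k] A) (v : B) :
    TensorProduct.map (piA k A B) (piB k A B)
        ((TensorProduct.assoc k A B (A ⊗[k] B)).symm
          (x ⊗ₜ[k] TensorProduct.assoc k B A B (c ⊗ₜ[k] v)))
      = Coalgebra.counit (R := k)
          (TensorProduct.lid k A (LinearMap.rTensor A (Coalgebra.counit (R := k)) c))
          • (x ⊗ₜ[k] v) := by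
  induction c using TensorProduct.induction_on with
  | zero => simp
  | add c c' hc hc' => simp only [add_tmul, map_add, tmul_add, hc, hc', add_smul]
  | tmul u w =>
    simp only [TensorProduct.assoc_tmul, TensorProduct.assoc_symm_tmul, TensorProduct.map_tmul,
      piA_tmul, piB_tmul, LinearMap.rTensor_tmul, TensorProduct.lid_tmul, map_smul, smul_eq_mul,
      TensorProduct.smul_tmul_smul]

namespace IsSmashBiproduct

variable (hsb : IsSmashBiproduct k A B σ τ)
include hsb

/- `A` and `B` are only algebras and coalgebras, so `ε(1) = 1` is not available for either factor;
only this product of the two is. -/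
lemma counit_one_mul_counit_one :
    Coalgebra.counit (R := k) (1 : A) * Coalgebra.counit (R := k) (1 : B) = 1 := by
  simpa only [smashCounit_tmul] using hsb.counit_one

lemma counit_mul_snd (b b' : B) :
    Coalgebra.counit (R := k) (b * b')
      = Coalgebra.counit (R := k) (1 : A) * Coalgebra.counit (R := k) b
          * Coalgebra.counit (R := k) b' := by
  have h := hsb.counit_mul ((1 : A) ⊗ₜ[k] b) ((1 : A) ⊗ₜ[k] b')
  simp only [smashMul_tmul_tmul, hsb.sigma_one_left, TensorProduct.map_tmul,
    LinearMap.mulLeft_one, LinearMap.id_apply, LinearMap.mulRight_apply, smashCounit_tmul] at h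
  apply mul_left_cancel₀ (left_ne_zero_of_mul_eq_one hsb.counit_one_mul_counit_one)
  rw [h]
  ring

lemma counit_mul_fst (a a' : A) :
    Coalgebra.counit (R := k) (a * a')
      = Coalgebra.counit (R := k) (1 : B) * Coalgebra.counit (R := k) a
          * Coalgebra.counit (R := k) a' := by
  have h := hsb.counit_mul (a ⊗ₜ[k] (1 : B)) (a' ⊗ₜ[k] (1 : B))
  simp only [smashMul_tmul_tmul, hsb.sigma_one_right, TensorProduct.map_tmul,
    LinearMap.mulRight_one, LinearMap.id_apply, LinearMap.mulLeft_apply, smashCounit_tmul] at h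
  apply mul_right_cancel₀ (right_ne_zero_of_mul_eq_one hsb.counit_one_mul_counit_one)
  rw [h]
  ring

lemma piA_map_mulLeft_mulRight (a : A) (b : B) (c : A ⊗[k] B) :
    piA k A B (TensorProduct.map (LinearMap.mulLeft k a) (LinearMap.mulRight k b) c)
      = (Coalgebra.counit (R := k) (1 : A) * Coalgebra.counit (R := k) b)
          • (a * piA k A B c) := by
  induction c using TensorProduct.induction_on with
  | zero => simp
  | tmul s t =>
    simp only [TensorProduct.map_tmul, LinearMap.mulLeft_apply, LinearMap.mulRight_apply, piA_tmul,
      hsb.counit_mul_snd, mul_smul_comm, smul_smul]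
    rw [mul_right_comm]
  | add c c' hc hc' => simp only [map_add, hc, hc', mul_add, smul_add]

lemma piB_map_mulLeft_mulRight (a : A) (b : B) (c : A ⊗[k] B) :
    piB k A B (TensorProduct.map (LinearMap.mulLeft k a) (LinearMap.mulRight k b) c)
      = (Coalgebra.counit (R := k) (1 : B) * Coalgebra.counit (R := k) a)
          • (piB k A B c * b) := by
  induction c using TensorProduct.induction_on with
  | zero => simp
  | tmul s t =>
    simp only [TensorProduct.map_tmul, LinearMap.mulLeft_apply, LinearMap.mulRight_apply, piB_tmul,
      hsb.counit_mul_fst, smul_mul_assoc, smul_smul]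
  | add c c' hc hc' => simp only [map_add, hc, hc', add_mul, smul_add]

lemma piA_smashMul (hlc : LeftConormal k A B σ) (x y : A ⊗[k] B) :
    piA k A B (smashMul k A B σ (x ⊗ₜ[k] y))
      = Coalgebra.counit (R := k) (1 : A) • (piA k A B x * piA k A B y) := by
  induction x using TensorProduct.induction_on with
  | zero => simp
  | add x x' hx hx' => simp only [add_tmul, map_add, hx, hx', add_mul, smul_add]
  | tmul a b =>
    induction y using TensorProduct.induction_on with
    | zero => simp
    | add y y' hy hy' => simp only [tmul_add, map_add, hy, hy', mul_add, smul_add]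
    | tmul a' b' =>
      rw [smashMul_tmul_tmul, hsb.piA_map_mulLeft_mulRight, hlc.piA_sigma]
      simp only [piA_tmul, smul_mul_assoc, mul_smul_comm, smul_smul]
      congr 1
      ring

lemma piB_smashMul (hrc : RightConormal k A B σ) (x y : A ⊗[k] B) :
    piB k A B (smashMul k A B σ (x ⊗ₜ[k] y))
      = Coalgebra.counit (R := k) (1 : B) • (piB k A B x * piB k A B y) := by
  induction x using TensorProduct.induction_on with
  | zero => simp
  | add x x' hx hx' => simp only [add_tmul, map_add, hx, hx', add_mul, smul_add]
  | tmul a b =>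
    induction y using TensorProduct.induction_on with
    | zero => simp
    | add y y' hy hy' => simp only [tmul_add, map_add, hy, hy', mul_add, smul_add]
    | tmul a' b' =>
      rw [smashMul_tmul_tmul, hsb.piB_map_mulLeft_mulRight, hrc.piB_sigma]
      simp only [piB_tmul, smul_mul_assoc, mul_smul_comm, smul_smul]
      congr 1
      ring

lemma map_piA_piB_mul2 (hlc : LeftConormal k A B σ) (hrc : RightConormal k A B σ)
    (X Y : (A ⊗[k] B) ⊗[k] (A ⊗[k] B)) :
    TensorProduct.map (piA k A B) (piB k A B)
        (mul2 k (A ⊗[k] B) (smashMul k A B σ) (X ⊗ₜ[k] Y))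
      = TensorProduct.map (piA k A B) (piB k A B) X
          * TensorProduct.map (piA k A B) (piB k A B) Y := by
  induction X using TensorProduct.induction_on with
  | zero => simp
  | add X X' hX hX' => simp only [add_tmul, map_add, hX, hX', add_mul]
  | tmul x x' =>
    induction Y using TensorProduct.induction_on with
    | zero => simp
    | add Y Y' hY hY' => simp only [tmul_add, map_add, hY, hY', mul_add]
    | tmul y y' =>
      simp only [mul2, LinearMap.coe_comp, Function.comp_apply, LinearEquiv.coe_coe,
        TensorProduct.tensorTensorTensorComm_tmul, TensorProduct.map_tmul,
        hsb.piA_smashMul hlc, hsb.piB_smashMul hrc, TensorProduct.smul_tmul_smul,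
        hsb.counit_one_mul_counit_one, one_smul, Algebra.TensorProduct.tmul_mul_tmul]

lemma map_piA_piB_comp_smashComul :
    TensorProduct.map (piA k A B) (piB k A B) ∘ₗ smashComul k A B τ
      = TensorProduct.map
          ((TensorProduct.rid k A).toLinearMap ∘ₗ LinearMap.lTensor A (Coalgebra.counit (R := k)))
          ((TensorProduct.lid k B).toLinearMap ∘ₗ LinearMap.rTensor B (Coalgebra.counit (R := k)))
        ∘ₗ TensorProduct.map Coalgebra.comul Coalgebra.comul := by
  simp only [smashComul, ← LinearMap.comp_assoc]
  congr 1
  refine TensorProduct.ext_fourfold' fun x y u v => ?_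
  simp only [LinearMap.coe_comp, Function.comp_apply, LinearEquiv.coe_coe,
    TensorProduct.assoc_tmul, TensorProduct.map_tmul, LinearMap.id_coe, id_eq,
    TensorProduct.assoc_symm_tmul, map_piA_piB_assoc_tmul, hsb.tau_counit_left,
    LinearMap.lTensor_tmul, LinearMap.rTensor_tmul, TensorProduct.rid_tmul, TensorProduct.lid_tmul,
    map_smul, smul_eq_mul, TensorProduct.smul_tmul_smul, mul_comm]

lemma map_piA_piB_smashComul (x : A ⊗[k] B) :
    TensorProduct.map (piA k A B) (piB k A B) (smashComul k A B τ x) = x := by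
  rw [← LinearMap.comp_apply, hsb.map_piA_piB_comp_smashComul]
  induction x using TensorProduct.induction_on with
  | zero => simp
  | add x x' hx hx' => simp only [map_add, hx, hx']
  | tmul a b => simp [Coalgebra.lTensor_counit_comul, Coalgebra.rTensor_counit_comul]

end IsSmashBiproduct

end SmashBiproduct

/-- If `σ` is both left and right conormal, then `σ` is the tensor flip. -/
theorem stmt10 (hsb : IsSmashBiproduct k A B σ τ)
    (hlc : LeftConormal k A B σ) (hrc : RightConormal k A B σ) :
    ∀ (a : A) (b : B), σ (b ⊗ₜ[k] a) = a ⊗ₜ[k] b := by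
  intro a b
  have h := congrArg (TensorProduct.map (piA k A B) (piB k A B))
    (hsb.comul_mul ((1 : A) ⊗ₜ[k] b) (a ⊗ₜ[k] (1 : B)))
  rwa [smashMul_one_tmul_tmul_one, hsb.map_piA_piB_smashComul, hsb.map_piA_piB_mul2 hlc hrc,
    hsb.map_piA_piB_smashComul, hsb.map_piA_piB_smashComul, Algebra.TensorProduct.tmul_mul_tmul,
    one_mul, mul_one] at h

end
end
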